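/- For jointly distributed discrete random variables X, X_r, Y, Y_r, Ŷ_r such that Ŷ_r is conditionally independent of (X, Y) given (X_r, Y_r) (i.e., the joint law factors as p(x)p(x_r)p(ŷ_r|y_r,x_r)p(y,y_r|x,x_r)), the following identity holds: I(X,X_r;Y) + I(Ŷ_r;X,Y|X_r) − I(Ŷ_r;Y_r|X_r) = I(X,X_r;Y) − I(Ŷ_r;Y_r|X,X_r,Y). -/

import Mathlib

open scoped BigOperators Classical

/-- Probability that the random variable `X` takes value `a`, under pmf `p` on `Ω`. -/
noncomputable def jp {Ω A : Type*} [Fintype Ω] (p : Ω → ℝ) (X : Ω → A) (a : A) : ℝ :=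
  ∑ ω, if X ω = a then p ω else 0

/-- Conditional mutual information `I(X;Y|Z)` of finite discrete random variables
(natural logarithm). -/
noncomputable def condMI {Ω A B C : Type*} [Fintype Ω] [Fintype A] [Fintype B] [Fintype C]
    (p : Ω → ℝ) (X : Ω → A) (Y : Ω → B) (Z : Ω → C) : ℝ :=
  ∑ a : A, ∑ b : B, ∑ c : C,
    jp p (fun ω => (X ω, Y ω, Z ω)) (a, b, c) *
      Real.log (jp p (fun ω => (X ω, Y ω, Z ω)) (a, b, c) * jp p Z c /
        (jp p (fun ω => (X ω, Z ω)) (a, c) * jp p (fun ω => (Y ω, Z ω)) (b, c)))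

/-- `p` is a probability mass function. -/
def IsPMF {Ω : Type*} [Fintype Ω] (p : Ω → ℝ) : Prop :=
  (∀ ω, 0 ≤ p ω) ∧ ∑ ω, p ω = 1

/-!
`I(Ŷ; X,Y,Y_r | X_r)` expands by the chain rule both as `I(Ŷ; X,Y | X_r) + I(Ŷ; Y_r | X,X_r,Y)`
and as `I(Ŷ; Y_r | X_r) + I(Ŷ; X,Y | Y_r,X_r)`. The factorization of the joint law makes `Ŷ`
conditionally independent of `(X, Y)` given `(Y_r, X_r)`, so the last term vanishes.
-/

section

variable {Ω : Type*} [Fintype Ω] (p : Ω → ℝ)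

lemma sum_jp_mul {V : Type*} [Fintype V] (W : Ω → V) (φ : V → ℝ) :
    ∑ v, jp p W v * φ v = ∑ ω, p ω * φ (W ω) := by
  simp only [jp, Finset.sum_mul, ite_mul, zero_mul]
  rw [Finset.sum_comm]
  simp

lemma jp_comp_eq_sum {V T : Type*} [Fintype V] (W : Ω → V) (π : V → T) (t : T) :
    jp p (fun ω => π (W ω)) t = ∑ v, if π v = t then jp p W v else 0 := by
  have := sum_jp_mul p W (fun v => if π v = t then 1 else 0)
  simpa [jp, mul_ite] using this.symm

lemma jp_comp_of_injective {V T : Type*} (W : Ω → V) {e : V → T} (he : Function.Injective e)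
    (v : V) : jp p (fun ω => e (W ω)) (e v) = jp p W v := by
  simp only [jp, he.eq_iff]

lemma jp_self_congr {U V : Type*} {X : Ω → U} {Y : Ω → V} (ω : Ω)
    (h : ∀ ω', X ω' = X ω ↔ Y ω' = Y ω) : jp p X (X ω) = jp p Y (Y ω) := by
  simp only [jp, h]

lemma le_jp_self {p : Ω → ℝ} (hp : ∀ ω, 0 ≤ p ω) {V : Type*} (W : Ω → V) (ω : Ω) :
    p ω ≤ jp p W (W ω) := by
  have := Finset.single_le_sum (f := fun ω' => if W ω' = W ω then p ω' else 0)
    (fun ω' _ => by split <;> simp [hp ω']) (Finset.mem_univ ω)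
  simpa [jp] using this

lemma jp_self_pos {p : Ω → ℝ} (hp : ∀ ω, 0 ≤ p ω) {ω : Ω} (hω : 0 < p ω) {V : Type*}
    (W : Ω → V) : 0 < jp p W (W ω) :=
  hω.trans_le (le_jp_self hp W ω)

variable {A B C D : Type*} [Fintype A] [Fintype B] [Fintype C] [Fintype D]

lemma condMI_eq_sum (X : Ω → A) (Y : Ω → B) (Z : Ω → C) :
    condMI p X Y Z = ∑ ω, p ω *
      Real.log (jp p (fun ω => (X ω, Y ω, Z ω)) (X ω, Y ω, Z ω) * jp p Z (Z ω) /
        (jp p (fun ω => (X ω, Z ω)) (X ω, Z ω) * jp p (fun ω => (Y ω, Z ω)) (Y ω, Z ω))) := by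
  rw [condMI, ← sum_jp_mul p (fun ω => (X ω, Y ω, Z ω)) (fun t => Real.log
    (jp p (fun ω => (X ω, Y ω, Z ω)) t * jp p Z t.2.2 /
      (jp p (fun ω => (X ω, Z ω)) (t.1, t.2.2) * jp p (fun ω => (Y ω, Z ω)) (t.2.1, t.2.2))))]
  simp only [Fintype.sum_prod_type]

lemma condMI_congr {A' B' C' : Type*} [Fintype A'] [Fintype B'] [Fintype C']
    {X : Ω → A} {Y : Ω → B} {Z : Ω → C} {X' : Ω → A'} {Y' : Ω → B'} {Z' : Ω → C'}
    (hX : ∀ ω ω', X ω' = X ω ↔ X' ω' = X' ω) (hY : ∀ ω ω', Y ω' = Y ω ↔ Y' ω' = Y' ω)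
    (hZ : ∀ ω ω', Z ω' = Z ω ↔ Z' ω' = Z' ω) :
    condMI p X Y Z = condMI p X' Y' Z' := by
  simp only [condMI_eq_sum]
  refine Finset.sum_congr rfl fun ω _ => ?_
  congr 4 <;> apply jp_self_congr <;> simp [hX ω, hY ω, hZ ω]

lemma condMI_chain_rule {p : Ω → ℝ} (hp : ∀ ω, 0 ≤ p ω)
    (X : Ω → A) (Y : Ω → B) (Z : Ω → C) (W : Ω → D) :
    condMI p X (fun ω => (Y ω, Z ω)) W =
      condMI p X Y W + condMI p X Z (fun ω => (Y ω, W ω)) := by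
  simp only [condMI_eq_sum, ← Finset.sum_add_distrib, ← mul_add]
  refine Finset.sum_congr rfl fun ω _ => ?_
  rcases (hp ω).eq_or_lt with hω | hω
  · simp [← hω]
  have h₁ := jp_self_pos hp hω (fun ω => (X ω, Y ω, W ω))
  have h₂ := jp_self_pos hp hω W
  have h₃ := jp_self_pos hp hω (fun ω => (X ω, W ω))
  have h₄ := jp_self_pos hp hω (fun ω => (Y ω, W ω))
  have h₅ := jp_self_pos hp hω (fun ω => (X ω, Z ω, (Y ω, W ω)))
  have h₆ := jp_self_pos hp hω (fun ω => (Z ω, (Y ω, W ω)))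
  rw [jp_self_congr p (X := fun ω => (X ω, (Y ω, Z ω), W ω))
      (Y := fun ω => (X ω, Z ω, (Y ω, W ω))) ω (by simp only [Prod.mk.injEq]; tauto),
    jp_self_congr p (X := fun ω => ((Y ω, Z ω), W ω))
      (Y := fun ω => (Z ω, (Y ω, W ω))) ω (by simp only [Prod.mk.injEq]; tauto),
    ← Real.log_mul (by positivity) (by positivity)]
  congr 2
  field_simp

def CondIndep (X : Ω → A) (Y : Ω → B) (Z : Ω → C) : Prop :=
  ∀ a b c, jp p (fun ω => (X ω, Y ω, Z ω)) (a, b, c) * jp p Z c =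
    jp p (fun ω => (X ω, Z ω)) (a, c) * jp p (fun ω => (Y ω, Z ω)) (b, c)

lemma condMI_eq_zero_of_condIndep {X : Ω → A} {Y : Ω → B} {Z : Ω → C}
    (h : CondIndep p X Y Z) : condMI p X Y Z = 0 := by
  refine Finset.sum_eq_zero fun a _ => Finset.sum_eq_zero fun b _ =>
    Finset.sum_eq_zero fun c _ => ?_
  rw [h a b c]
  -- each logarithm is `log (x / x)`, which vanishes also when `x = 0`
  rcases eq_or_ne (jp p (fun ω => (X ω, Z ω)) (a, c) * jp p (fun ω => (Y ω, Z ω)) (b, c)) 0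
    with h0 | h0 <;> simp [h0]

lemma CondIndep.of_jp_eq_mul {X : Ω → A} {Y : Ω → B} {Z : Ω → C} (F : A → C → ℝ)
    (G : B → C → ℝ) (hFG : ∀ a b c, jp p (fun ω => (X ω, Y ω, Z ω)) (a, b, c) = F a c * G b c) :
    CondIndep p X Y Z := by
  intro a b c
  set XYZ := fun ω => (X ω, Y ω, Z ω)
  have hXZ : jp p (fun ω => (X ω, Z ω)) (a, c) = ∑ b, jp p XYZ (a, b, c) := by
    rw [jp_comp_eq_sum p XYZ (fun v => (v.1, v.2.2))]
    simp [Fintype.sum_prod_type, ite_and]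
  have hYZ : jp p (fun ω => (Y ω, Z ω)) (b, c) = ∑ a, jp p XYZ (a, b, c) := by
    rw [jp_comp_eq_sum p XYZ (fun v => v.2)]
    simp [Fintype.sum_prod_type, ite_and]
  have hZ : jp p Z c = ∑ a, ∑ b, jp p XYZ (a, b, c) := by
    rw [jp_comp_eq_sum p XYZ (fun v => v.2.2)]
    simp [Fintype.sum_prod_type]
  simp only [hXZ, hYZ, hZ, hFG, ← Finset.mul_sum, ← Finset.sum_mul]
  ring

end

/-- if the joint law factors as `p(x)p(xr)p(ŷr|yr,xr)p(y,yr|x,xr)`, then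
`I(X,Xr;Y) + I(Yh;X,Y|Xr) − I(Yh;Yr|Xr) = I(X,Xr;Y) − I(Yh;Yr|X,Xr,Y)`. -/
theorem stmt0 {Ω A Ar B Br Bh : Type*} [Fintype Ω]
    [Fintype A] [Fintype Ar] [Fintype B] [Fintype Br] [Fintype Bh]
    (p : Ω → ℝ) (hp : IsPMF p)
    (X : Ω → A) (Xr : Ω → Ar) (Y : Ω → B) (Yr : Ω → Br) (Yh : Ω → Bh)
    (hfact : ∃ (f : A → ℝ) (fr : Ar → ℝ) (fh : Bh → Br → Ar → ℝ) (fc : B → Br → A → Ar → ℝ),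
      ∀ a ar b br h,
        jp p (fun ω => (X ω, Xr ω, Y ω, Yr ω, Yh ω)) (a, ar, b, br, h) =
          f a * fr ar * fh h br ar * fc b br a ar) :
    condMI p (fun ω => (X ω, Xr ω)) Y (fun _ => (0 : Fin 1)) +
        condMI p Yh (fun ω => (X ω, Y ω)) Xr - condMI p Yh Yr Xr =
      condMI p (fun ω => (X ω, Xr ω)) Y (fun _ => (0 : Fin 1)) -
        condMI p Yh Yr (fun ω => (X ω, Xr ω, Y ω)) := by
  obtain ⟨f, fr, fh, fc, hfact⟩ := hfact
  have markov : CondIndep p Yh (fun ω => (X ω, Y ω)) (fun ω => (Yr ω, Xr ω)) := by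
    refine .of_jp_eq_mul p (fun h c => fh h c.1 c.2)
      (fun ab c => f ab.1 * fr c.2 * fc ab.2 c.1 ab.1 c.2) fun h ⟨a, b⟩ ⟨br, ar⟩ => ?_
    have he : Function.Injective fun v : A × Ar × B × Br × Bh =>
        (v.2.2.2.2, (v.1, v.2.2.1), (v.2.2.2.1, v.2.1)) := by
      rintro ⟨_, _, _, _, _⟩ ⟨_, _, _, _, _⟩ h
      simp_all
    rw [jp_comp_of_injective p (fun ω => (X ω, Xr ω, Y ω, Yr ω, Yh ω)) he (a, ar, b, br, h),
      hfact]
    ring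
  have chain₁ := condMI_chain_rule hp.1 Yh (fun ω => (X ω, Y ω)) Yr Xr
  have chain₂ := condMI_chain_rule hp.1 Yh Yr (fun ω => (X ω, Y ω)) Xr
  rw [condMI_eq_zero_of_condIndep p markov] at chain₂
  have swap : condMI p Yh (fun ω => ((X ω, Y ω), Yr ω)) Xr =
      condMI p Yh (fun ω => (Yr ω, (X ω, Y ω))) Xr :=
    condMI_congr p (fun _ _ => Iff.rfl) (fun _ _ => by simp only [Prod.mk.injEq]; tauto)
      (fun _ _ => Iff.rfl)
  have regroup : condMI p Yh Yr (fun ω => ((X ω, Y ω), Xr ω)) =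
      condMI p Yh Yr (fun ω => (X ω, Xr ω, Y ω)) :=
    condMI_congr p (fun _ _ => Iff.rfl) (fun _ _ => Iff.rfl)
      (fun _ _ => by simp only [Prod.mk.injEq]; tauto)
  linarith
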